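/- Equivalence of weighted semi-norms: For any γ₁, γ₂ > 0 there exist constants c, C > 0 (depending on γ₁, γ₂ and the lattice Λ = AZ^m) such that c ‖Du‖_{ℓ²_{γ₂}} ≤ ‖Du‖_{ℓ²_{γ₁}} ≤ C ‖Du‖_{ℓ²_{γ₂}} for all u : Λ → R^d. -/

import Mathlib

/-!
Write `N ζ` for the `ℓ²` norm of the difference `u (· + ζ) - u`, so that
`‖Du‖²_γ = ∑_ζ e^{-2γ|Aζ|} N(ζ)²`. By Minkowski's inequality and translation invariance, `N` is
subadditive and even, hence `N ζ ≤ |ζ|₁ · ∑ᵢ N(eᵢ)`, while a single term of the series gives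
`N(eᵢ) ≤ e^{γ₂|Aeᵢ|} ‖Du‖_{γ₂}`. Therefore
`‖Du‖²_{γ₁} ≤ (∑_ζ |ζ|₁² e^{-2γ₁|Aζ|}) (∑ᵢ e^{γ₂|Aeᵢ|})² ‖Du‖²_{γ₂}`, and the series is finite
because `|ζ|₁ ≤ c |Aζ|` for invertible `A`. Exchanging `γ₁` and `γ₂` gives the other bound.
-/

open scoped BigOperators ENNReal

/-- Euclidean norm of a finite real vector. -/
noncomputable def vnorm {n : ℕ} (x : Fin n → ℝ) : ℝ := Real.sqrt (∑ i, (x i) ^ 2)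

/-- The lattice point `A z ∈ ℝ^m` associated to the integer vector `z`. -/
noncomputable def latPt {m : ℕ} (A : Matrix (Fin m) (Fin m) ℝ) (z : Fin m → ℤ) : Fin m → ℝ :=
  A.mulVec fun i => (z i : ℝ)

/-- `‖Du‖_{ℓ²_γ}` as an extended real number (so that no summability assumption
is needed). -/
noncomputable def normDE {m d : ℕ} (A : Matrix (Fin m) (Fin m) ℝ) (γ : ℝ)
    (u : (Fin m → ℤ) → Fin d → ℝ) : ℝ≥0∞ :=
  (∑' z : Fin m → ℤ, ∑' ζ : Fin m → ℤ,
    ENNReal.ofReal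
      (Real.exp (-2 * γ * vnorm (latPt A ζ)) * (vnorm (u (z + ζ) - u z)) ^ 2))
    ^ ((1 : ℝ) / 2)

open scoped Matrix
open Real

theorem ENNReal.Lp_add_le_tsum {ι : Type*} (f g : ι → ℝ≥0∞) {p : ℝ} (hp : 1 ≤ p) :
    (∑' i, (f i + g i) ^ p) ^ (1 / p) ≤
      (∑' i, f i ^ p) ^ (1 / p) + (∑' i, g i ^ p) ^ (1 / p) := by
  let _ : MeasurableSpace ι := ⊤
  simpa only [MeasureTheory.lintegral_count' measurable_from_top, Pi.add_apply] using
    ENNReal.lintegral_Lp_add_le (μ := MeasureTheory.Measure.count)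
      measurable_from_top.aemeasurable measurable_from_top.aemeasurable hp

theorem ENNReal.tsum_fin_pi_prod {α : Type*} :
    ∀ {k : ℕ} (f : Fin k → α → ℝ≥0∞), ∑' ζ : Fin k → α, ∏ i, f i (ζ i) = ∏ i, ∑' a, f i a
  | 0, f => by simp
  | k + 1, f => by
    rw [← (Fin.consEquiv fun _ => α).tsum_eq, ENNReal.tsum_prod', Fin.prod_univ_succ]
    simp [Fin.consEquiv, Fin.prod_univ_succ, ENNReal.tsum_mul_left, ENNReal.tsum_mul_right,
      ENNReal.tsum_fin_pi_prod]

theorem ENNReal.rpow_one_half_rpow_two (x : ℝ≥0∞) : (x ^ (1 / 2 : ℝ)) ^ (2 : ℝ) = x := by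
  rw [← ENNReal.rpow_mul]; norm_num

section DiffNorm

variable {G E : Type*} [AddCommGroup G] [NormedAddCommGroup E]

noncomputable def diffNorm (u : G → E) (ζ : G) : ℝ≥0∞ :=
  (∑' z, ‖u (z + ζ) - u z‖ₑ ^ (2 : ℝ)) ^ (1 / 2 : ℝ)

variable (u : G → E)

@[simp] lemma diffNorm_zero : diffNorm u 0 = 0 := by norm_num [diffNorm]

lemma diffNorm_add_le (σ τ : G) : diffNorm u (σ + τ) ≤ diffNorm u σ + diffNorm u τ := by
  have hsplit (z : G) :
      ‖u (z + (σ + τ)) - u z‖ₑ ≤ ‖u (z + τ + σ) - u (z + τ)‖ₑ + ‖u (z + τ) - u z‖ₑ := by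
    rw [← add_assoc, add_right_comm, ← sub_add_sub_cancel (u (z + τ + σ)) (u (z + τ)) (u z)]
    exact enorm_add_le _ _
  calc diffNorm u (σ + τ)
      ≤ (∑' z, (‖u (z + τ + σ) - u (z + τ)‖ₑ + ‖u (z + τ) - u z‖ₑ) ^ (2 : ℝ)) ^ (1 / 2 : ℝ) := by
        unfold diffNorm; gcongr with z; exact hsplit z
    _ ≤ _ := ENNReal.Lp_add_le_tsum _ _ one_le_two
    _ = diffNorm u σ + diffNorm u τ := by
        congr 2
        exact (Equiv.addRight τ).tsum_eq fun z => ‖u (z + σ) - u z‖ₑ ^ (2 : ℝ)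

lemma diffNorm_neg (ζ : G) : diffNorm u (-ζ) = diffNorm u ζ := by
  rw [diffNorm, diffNorm, ← (Equiv.addRight ζ).tsum_eq]
  simp [enorm_sub_rev]

lemma diffNorm_nsmul_le (n : ℕ) (ζ : G) : diffNorm u (n • ζ) ≤ n * diffNorm u ζ := by
  induction n with
  | zero => simp
  | succ n ih =>
    calc diffNorm u ((n + 1) • ζ) ≤ diffNorm u (n • ζ) + diffNorm u ζ := by
          rw [succ_nsmul]; exact diffNorm_add_le u _ _
      _ ≤ n * diffNorm u ζ + diffNorm u ζ := by gcongr
      _ = (n + 1 : ℕ) * diffNorm u ζ := by push_cast; ring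

lemma diffNorm_zsmul_le (n : ℤ) (ζ : G) : diffNorm u (n • ζ) ≤ n.natAbs * diffNorm u ζ := by
  obtain ⟨k, rfl | rfl⟩ := Int.eq_nat_or_neg n
  · simpa using diffNorm_nsmul_le u k ζ
  · simpa [diffNorm_neg] using diffNorm_nsmul_le u k ζ

lemma diffNorm_le_sum_natAbs_mul {ι : Type*} [Fintype ι] [DecidableEq ι] (u : (ι → ℤ) → E)
    (ζ : ι → ℤ) : diffNorm u ζ ≤ ∑ i, (ζ i).natAbs * diffNorm u (Pi.single i 1) :=
  calc diffNorm u ζ = diffNorm u (∑ i, ζ i • Pi.single i 1) := by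
        congr; ext j; simp [Finset.sum_apply, Pi.single_apply]
    _ ≤ ∑ i, diffNorm u (ζ i • Pi.single i 1) :=
        Finset.le_sum_of_subadditive _ (diffNorm_zero u).le (diffNorm_add_le u) _ _
    _ ≤ _ := Finset.sum_le_sum fun i _ => diffNorm_zsmul_le u _ _

noncomputable def weightedDiffNorm (w : G → ℝ≥0∞) (u : G → E) : ℝ≥0∞ :=
  (∑' ζ, w ζ * diffNorm u ζ ^ (2 : ℝ)) ^ (1 / 2 : ℝ)

lemma diffNorm_le_mul_weightedDiffNorm {w : G → ℝ≥0∞} {c : ℝ≥0∞} {ζ : G}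
    (hc : 1 ≤ c ^ (2 : ℝ) * w ζ) : diffNorm u ζ ≤ c * weightedDiffNorm w u := by
  rw [← ENNReal.rpow_le_rpow_iff two_pos, ENNReal.mul_rpow_of_nonneg _ _ zero_le_two,
    weightedDiffNorm, ENNReal.rpow_one_half_rpow_two]
  calc diffNorm u ζ ^ (2 : ℝ) ≤ c ^ (2 : ℝ) * w ζ * diffNorm u ζ ^ (2 : ℝ) :=
        le_mul_of_one_le_left' hc
    _ ≤ c ^ (2 : ℝ) * ∑' ζ, w ζ * diffNorm u ζ ^ (2 : ℝ) := by
        rw [mul_assoc]; gcongr; exact ENNReal.le_tsum ζ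

theorem weightedDiffNorm_le_mul_weightedDiffNorm {ι : Type*} [Fintype ι] [DecidableEq ι]
    (w₁ w₂ : (ι → ℤ) → ℝ≥0∞) (c : ι → ℝ≥0∞)
    (hc : ∀ i, 1 ≤ c i ^ (2 : ℝ) * w₂ (Pi.single i 1)) (u : (ι → ℤ) → E) :
    weightedDiffNorm w₁ u ≤
      (∑' ζ, w₁ ζ * (∑ i, ((ζ i).natAbs : ℝ≥0∞)) ^ (2 : ℝ)) ^ (1 / 2 : ℝ) * (∑ i, c i) *
        weightedDiffNorm w₂ u := by
  set B := (∑ i, c i) * weightedDiffNorm w₂ u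
  have hstep (i : ι) : diffNorm u (Pi.single i 1) ≤ B :=
    (diffNorm_le_mul_weightedDiffNorm u (hc i)).trans <|
      mul_le_mul_left (Finset.single_le_sum (fun j _ => zero_le) (Finset.mem_univ i)) _
  have hζ (ζ : ι → ℤ) : diffNorm u ζ ≤ (∑ i, ((ζ i).natAbs : ℝ≥0∞)) * B := by
    rw [Finset.sum_mul]
    exact (diffNorm_le_sum_natAbs_mul u ζ).trans (by gcongr with i; exact hstep i)
  calc weightedDiffNorm w₁ u
      ≤ (∑' ζ, w₁ ζ * ((∑ i, ((ζ i).natAbs : ℝ≥0∞)) * B) ^ (2 : ℝ)) ^ (1 / 2 : ℝ) := by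
        unfold weightedDiffNorm; gcongr with ζ; exact hζ ζ
    _ = _ := by
        simp_rw [ENNReal.mul_rpow_of_nonneg _ _ zero_le_two, ← mul_assoc, ENNReal.tsum_mul_right,
          ENNReal.mul_rpow_of_nonneg _ _ (by norm_num : (0 : ℝ) ≤ 1 / 2), ← ENNReal.rpow_mul]
        norm_num [B, mul_assoc]

end DiffNorm

lemma sq_mul_exp_neg_le {β t : ℝ} (hβ : 0 < β) (ht : 0 ≤ t) :
    t ^ 2 * exp (-(β * t)) ≤ 8 / β ^ 2 * exp (-(β / 2 * t)) := by
  have h := pow_div_factorial_le_exp (x := β * t / 2) (by positivity) 2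
  calc t ^ 2 * exp (-(β * t))
      = 8 / β ^ 2 * ((β * t / 2) ^ 2 / Nat.factorial 2) * exp (-(β * t)) := by
        field_simp; norm_num [Nat.factorial]; ring
    _ ≤ 8 / β ^ 2 * exp (β * t / 2) * exp (-(β * t)) := by gcongr
    _ = 8 / β ^ 2 * exp (-(β / 2 * t)) := by rw [mul_assoc, ← exp_add]; ring_nf

lemma tsum_ofReal_exp_neg_mul_abs_ne_top {β : ℝ} (hβ : 0 < β) :
    ∑' a : ℤ, ENNReal.ofReal (exp (-(β * |(a : ℝ)|))) ≠ ⊤ := by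
  have hnat : Summable fun n : ℕ => exp (-(β * n)) := by
    simpa [mul_comm] using Real.summable_exp_nat_mul_iff.mpr (neg_neg_iff_pos.mpr hβ)
  rw [← ENNReal.ofReal_tsum_of_nonneg (fun _ => (exp_pos _).le)
    (summable_int_iff_summable_nat_and_neg.mpr ⟨by simpa using hnat, by simpa using hnat⟩)]
  exact ENNReal.ofReal_ne_top

theorem tsum_mul_sq_sum_natAbs_ne_top {k : ℕ} {w : (Fin k → ℤ) → ℝ≥0∞} {β : ℝ} (hβ : 0 < β)
    (hw : ∀ ζ, w ζ ≤ ENNReal.ofReal (exp (-(β * ∑ i, |(ζ i : ℝ)|)))) :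
    ∑' ζ, w ζ * (∑ i, ((ζ i).natAbs : ℝ≥0∞)) ^ (2 : ℝ) ≠ ⊤ := by
  have hterm (ζ : Fin k → ℤ) : w ζ * (∑ i, ((ζ i).natAbs : ℝ≥0∞)) ^ (2 : ℝ) ≤
      ENNReal.ofReal (8 / β ^ 2) * ∏ i, ENNReal.ofReal (exp (-(β / 2 * |(ζ i : ℝ)|))) := by
    set t := ∑ i, |(ζ i : ℝ)|
    have ht : ∑ i, ((ζ i).natAbs : ℝ≥0∞) = ENNReal.ofReal t := by
      rw [ENNReal.ofReal_sum_of_nonneg fun i _ => abs_nonneg _]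
      congr 1 with i
      rw [← ENNReal.ofReal_natCast, Nat.cast_natAbs, Int.cast_abs]
    have hprod : ∏ i, ENNReal.ofReal (exp (-(β / 2 * |(ζ i : ℝ)|))) =
        ENNReal.ofReal (exp (-(β / 2 * t))) := by
      rw [← ENNReal.ofReal_prod_of_nonneg fun i _ => (exp_pos _).le, ← exp_sum,
        Finset.sum_neg_distrib, Finset.mul_sum]
    rw [hprod, ← ENNReal.ofReal_mul (by positivity), ht, ENNReal.rpow_two,
      ← ENNReal.ofReal_pow (by positivity)]
    calc w ζ * ENNReal.ofReal (t ^ 2)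
        ≤ ENNReal.ofReal (exp (-(β * t))) * ENNReal.ofReal (t ^ 2) := by gcongr; exact hw ζ
      _ = ENNReal.ofReal (t ^ 2 * exp (-(β * t))) := by
          rw [← ENNReal.ofReal_mul (exp_pos _).le, mul_comm]
      _ ≤ _ := ENNReal.ofReal_le_ofReal (sq_mul_exp_neg_le hβ (by positivity))
  refine ne_top_of_le_ne_top ?_ (ENNReal.tsum_le_tsum hterm)
  rw [ENNReal.tsum_mul_left,
    ENNReal.tsum_fin_pi_prod fun _ (a : ℤ) => ENNReal.ofReal (exp (-(β / 2 * |(a : ℝ)|)))]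
  exact ENNReal.mul_ne_top ENNReal.ofReal_ne_top
    (ENNReal.prod_ne_top fun _ _ => tsum_ofReal_exp_neg_mul_abs_ne_top (half_pos hβ))

lemma vnorm_eq_norm {n : ℕ} (x : Fin n → ℝ) : vnorm x = ‖WithLp.toLp 2 x‖ := by
  simp [vnorm, EuclideanSpace.norm_eq]

lemma norm_le_vnorm {n : ℕ} (x : Fin n → ℝ) : ‖x‖ ≤ vnorm x := by
  rw [vnorm_eq_norm]
  exact pi_norm_le_iff_of_nonneg (norm_nonneg _) |>.2 fun i => by
    simpa using PiLp.norm_apply_le (WithLp.toLp 2 x) i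

open scoped Matrix.Norms.Operator in
lemma exists_sum_abs_le_mul_vnorm_mulVec {m : ℕ} {A : Matrix (Fin m) (Fin m) ℝ} (hA : IsUnit A) :
    ∃ c > 0, ∀ x : Fin m → ℝ, ∑ i, |x i| ≤ c * vnorm (A *ᵥ x) := by
  have hdet : IsUnit A.det := (Matrix.isUnit_iff_isUnit_det A).mp hA
  refine ⟨m * ‖A⁻¹‖ + 1, by positivity, fun x => ?_⟩
  have hinv : ‖x‖ ≤ ‖A⁻¹‖ * ‖A *ᵥ x‖ := by
    simpa [Matrix.mulVec_mulVec, Matrix.nonsing_inv_mul _ hdet] using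
      Matrix.linfty_opNorm_mulVec A⁻¹ (A *ᵥ x)
  calc ∑ i, |x i| ≤ m * ‖x‖ := by
        simpa using Finset.sum_le_sum fun i (_ : i ∈ Finset.univ) => norm_le_pi_norm x i
    _ ≤ m * ‖A⁻¹‖ * ‖A *ᵥ x‖ := by rw [mul_assoc]; gcongr
    _ ≤ (m * ‖A⁻¹‖ + 1) * vnorm (A *ᵥ x) :=
        mul_le_mul (le_add_of_nonneg_right zero_le_one) (norm_le_vnorm _) (norm_nonneg _)
          (by positivity)

lemma normDE_eq_weightedDiffNorm {m d : ℕ} (A : Matrix (Fin m) (Fin m) ℝ) (γ : ℝ)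
    (u : (Fin m → ℤ) → Fin d → ℝ) :
    normDE A γ u = weightedDiffNorm (fun ζ => ENNReal.ofReal (exp (-2 * γ * vnorm (latPt A ζ))))
      (fun z => WithLp.toLp 2 (u z)) := by
  rw [normDE, weightedDiffNorm, ENNReal.tsum_comm]
  refine congrArg (· ^ (1 / 2 : ℝ)) (tsum_congr fun ζ => ?_)
  rw [diffNorm, ENNReal.rpow_one_half_rpow_two, ← ENNReal.tsum_mul_left]
  refine tsum_congr fun z => ?_
  rw [ENNReal.ofReal_mul (exp_pos _).le, vnorm_eq_norm (u (z + ζ) - u z),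
    ENNReal.ofReal_pow (norm_nonneg _), ofReal_norm, ENNReal.rpow_two, WithLp.toLp_sub]

theorem exists_normDE_le_mul_normDE {m d : ℕ} {A : Matrix (Fin m) (Fin m) ℝ} (hA : IsUnit A)
    {γ₁ : ℝ} (hγ₁ : 0 < γ₁) (γ₂ : ℝ) :
    ∃ C > 0, ∀ u : (Fin m → ℤ) → Fin d → ℝ,
      normDE A γ₁ u ≤ ENNReal.ofReal C * normDE A γ₂ u := by
  obtain ⟨c, hc, hcA⟩ := exists_sum_abs_le_mul_vnorm_mulVec hA
  set K := ∑' ζ : Fin m → ℤ, ENNReal.ofReal (exp (-2 * γ₁ * vnorm (latPt A ζ))) *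
    (∑ i, ((ζ i).natAbs : ℝ≥0∞)) ^ (2 : ℝ)
  have hK : K ≠ ⊤ := by
    refine tsum_mul_sq_sum_natAbs_ne_top (β := 2 * γ₁ / c) (by positivity) fun ζ => ?_
    have hζ : 2 * γ₁ / c * ∑ i, |(ζ i : ℝ)| ≤ 2 * γ₁ * vnorm (latPt A ζ) :=
      calc _ ≤ 2 * γ₁ / c * (c * vnorm (latPt A ζ)) := by gcongr; exact hcA _
        _ = _ := by field_simp
    gcongr
    linarith
  set c' : Fin m → ℝ≥0∞ := fun i => ENNReal.ofReal (exp (γ₂ * vnorm (latPt A (Pi.single i 1))))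
  have hc' (i : Fin m) :
      1 ≤ c' i ^ (2 : ℝ) * ENNReal.ofReal (exp (-2 * γ₂ * vnorm (latPt A (Pi.single i 1)))) := by
    set v := vnorm (latPt A (Pi.single i 1))
    rw [ENNReal.ofReal_rpow_of_nonneg (exp_pos _).le zero_le_two,
      ← ENNReal.ofReal_mul (by positivity), ← exp_mul, ← exp_add,
      show γ₂ * v * 2 + -2 * γ₂ * v = 0 by ring, exp_zero, ENNReal.ofReal_one]
  set C₀ := K ^ (1 / 2 : ℝ) * ∑ i, c' i
  have hC₀ : C₀ ≠ ⊤ := ENNReal.mul_ne_top (ENNReal.rpow_ne_top_of_nonneg (by norm_num) hK)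
    (ENNReal.sum_ne_top.2 fun _ _ => ENNReal.ofReal_ne_top)
  refine ⟨C₀.toReal + 1, by positivity, fun u => ?_⟩
  rw [normDE_eq_weightedDiffNorm, normDE_eq_weightedDiffNorm]
  calc _ ≤ C₀ * _ := weightedDiffNorm_le_mul_weightedDiffNorm _ _ c' hc' _
    _ ≤ _ := by
        gcongr
        exact (ENNReal.le_ofReal_iff_toReal_le hC₀ (by positivity)).2 (by linarith)

/-- equivalence of the weighted semi-norms `‖·‖_{ℓ²_{γ₁}}` and
`‖·‖_{ℓ²_{γ₂}}` for any `γ₁, γ₂ > 0` on a Bravais lattice `Λ = Aℤ^m`. -/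
theorem weighted_seminorm_equivalence
    (m d : ℕ) (A : Matrix (Fin m) (Fin m) ℝ) (hA : IsUnit A)
    (γ₁ γ₂ : ℝ) (hγ₁ : 0 < γ₁) (hγ₂ : 0 < γ₂) :
    ∃ c C : ℝ, 0 < c ∧ 0 < C ∧
      ∀ u : (Fin m → ℤ) → Fin d → ℝ,
        ENNReal.ofReal c * normDE A γ₂ u ≤ normDE A γ₁ u ∧
        normDE A γ₁ u ≤ ENNReal.ofReal C * normDE A γ₂ u := by
  obtain ⟨C, hC, h₁₂⟩ := exists_normDE_le_mul_normDE (d := d) hA hγ₁ γ₂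
  obtain ⟨C', hC', h₂₁⟩ := exists_normDE_le_mul_normDE (d := d) hA hγ₂ γ₁
  refine ⟨C'⁻¹, C, inv_pos.2 hC', hC, fun u => ⟨?_, h₁₂ u⟩⟩
  calc ENNReal.ofReal C'⁻¹ * normDE A γ₂ u
      ≤ ENNReal.ofReal C'⁻¹ * (ENNReal.ofReal C' * normDE A γ₁ u) := by gcongr; exact h₂₁ u
    _ = normDE A γ₁ u := by
        rw [← mul_assoc, ← ENNReal.ofReal_mul (inv_pos.2 hC').le, inv_mul_cancel₀ hC'.ne',
          ENNReal.ofReal_one, one_mul]
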